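/- Fix a nonzero real number λ and an integer r ≥ 0. Let f(x) = Σ_{m=0}^{d} a_m x^m be a real polynomial with d ≥ r and let g(x) = Σ_{n=0}^{∞} b_n x^n ∈ ℝ[[x]] be a formal power series. Then the following identity holds in ℝ[[x]]: Σ_{m=r}^{d} a_m Σ_{k=r}^{m} {m brace k}_{r,λ} x^k g^{(k)}(x) = Σ_{n=r}^{∞} b_n · C(n,r) · r! · (Σ_{m=r}^{d} a_m (n)_{m−r,λ}) · x^n, where C(n,r) is the usual binomial coefficient, {m brace k}_{r,λ} denotes the degenerate r-Stirling number of the second kind {(m−r)+r brace (k−r)+r}_{r,λ}, and g^{(k)} is the k-th formal derivative of g. -/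

import Mathlib

open Finset PowerSeries

noncomputable section

/-- The degenerate falling factorial `(x)_{n,λ} = x(x-λ)⋯(x-(n-1)λ)`. -/
def dff (lam x : ℝ) (n : ℕ) : ℝ := ∏ i ∈ Finset.range n, (x - i * lam)

/-- The ordinary falling factorial `(x)_n = x(x-1)⋯(x-n+1)`. -/
def ff (x : ℝ) (n : ℕ) : ℝ := ∏ i ∈ Finset.range n, (x - i)

/-!
Both sides are compared coefficientwise. The operator `x^k D^k` multiplies the `n`-th coefficient
by the falling factorial `(n)_k`, so the `n`-th coefficient of the left-hand side is `b_n` times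
`∑_m a_m ∑_k {m brace k}_{r,λ} (n)_k`. Writing `(n)_k = (n)_r (n - r)_{k-r}` and applying the
defining identity of the `r`-Stirling numbers at `x = n - r` collapses the inner sum to
`(n)_r (n)_{m-r,λ}`, and `(n)_r = C(n,r) r!`.
-/

lemma ff_add (x : ℝ) (p q : ℕ) : ff x (p + q) = ff x p * ff (x - p) q := by
  rw [ff, ff, ff, prod_range_add]
  congr 1
  exact prod_congr rfl fun i _ => by push_cast; ring

lemma ff_natCast (n k : ℕ) : ff n k = n.descFactorial k := by
  rcases le_or_gt k n with hk | hk
  · rw [Nat.descFactorial_eq_prod_range, Nat.cast_prod, ff]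
    exact prod_congr rfl fun i hi => by rw [Nat.cast_sub (by grind)]
  · rw [Nat.descFactorial_of_lt hk, ff, prod_eq_zero (mem_range.mpr hk) (sub_self _)]
    simp

theorem PowerSeries.coeff_X_pow_mul_iterate_derivative {R : Type*} [CommSemiring R]
    (f : R⟦X⟧) (k n : ℕ) :
    coeff n (X ^ k * (d⁄dX R)^[k] f) = n.descFactorial k * coeff n f := by
  rw [coeff_X_pow_mul']
  split_ifs with hk
  · rw [coeff_iterate_derivative, ← Nat.add_descFactorial_eq_ascFactorial, Nat.sub_add_cancel hk]
  · rw [Nat.descFactorial_of_lt (not_le.mp hk), Nat.cast_zero, zero_mul]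

lemma sum_Icc_stirling_mul_ff {lam : ℝ} {r : ℕ} {S : ℕ → ℕ → ℝ}
    (hS : ∀ (n : ℕ) (x : ℝ), dff lam (x + r) n = ∑ k ∈ range (n + 1), S n k * ff x k)
    {m : ℕ} (hm : r ≤ m) (x : ℝ) :
    ∑ k ∈ Icc r m, S (m - r) (k - r) * ff x k = ff x r * dff lam x (m - r) := by
  have hS' := hS (m - r) (x - r)
  rw [sub_add_cancel] at hS'
  rw [hS', mul_sum, ← Ico_add_one_right_eq_Icc, sum_Ico_eq_sum_range, Nat.sub_add_comm hm]
  refine sum_congr rfl fun k _ => ?_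
  rw [Nat.add_sub_cancel_left, ff_add]
  ring

theorem statement_3_general (lam : ℝ) (r : ℕ)
    (S : ℕ → ℕ → ℝ)
    (hS : ∀ (n : ℕ) (x : ℝ), dff lam (x + r) n = ∑ k ∈ Finset.range (n + 1), S n k * ff x k)
    (d : ℕ) (a : ℕ → ℝ) (g : PowerSeries ℝ) :
    ∑ m ∈ Finset.Icc r d, a m •
        ∑ k ∈ Finset.Icc r m,
          S (m - r) (k - r) • (PowerSeries.X ^ k * (derivativeFun (R := ℝ))^[k] g) =
      PowerSeries.mk fun n =>
        (PowerSeries.coeff (R := ℝ) n g) * (n.choose r) * (r.factorial) *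
          ∑ m ∈ Finset.Icc r d, a m * dff lam (n : ℝ) (m - r) := by
  ext n
  rw [show (derivativeFun (R := ℝ)) = d⁄dX ℝ from rfl]
  simp only [map_sum, map_smul, smul_eq_mul, coeff_mk, coeff_X_pow_mul_iterate_derivative,
    ← ff_natCast]
  rw [mul_sum]
  refine sum_congr rfl fun m hm => ?_
  have hInner := sum_Icc_stirling_mul_ff hS (mem_Icc.mp hm).1 (n : ℝ)
  rw [ff_natCast, Nat.descFactorial_eq_factorial_mul_choose, Nat.cast_mul] at hInner
  calc a m * ∑ k ∈ Icc r m, S (m - r) (k - r) * (ff n k * coeff n g)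
      = a m * coeff n g * ∑ k ∈ Icc r m, S (m - r) (k - r) * ff n k := by
        rw [mul_sum, mul_sum]; exact sum_congr rfl fun k _ => by ring
    _ = _ := by rw [hInner]; ring

/-- for a polynomial `f(x) = ∑_{m=0}^d a_m x^m` with `d ≥ r` and a power series
`g`, `∑_{m=r}^d a_m ∑_{k=r}^m {m brace k}_{r,λ} x^k g^{(k)}(x)
   = ∑_{n=r}^∞ b_n C(n,r) r! (∑_{m=r}^d a_m (n)_{m-r,λ}) x^n`,
where `b_n` is the `n`-th coefficient of `g`, `S n k` denotes the degenerate `r`-Stirling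
number of the second kind `{n+r brace k+r}_{r,λ}`, characterized by
`(x+r)_{n,λ} = ∑_{k=0}^n S n k (x)_k`, so that `{m brace k}_{r,λ} = S (m-r) (k-r)`.
(The right-hand side effectively starts at `n = r` since `C(n,r) = 0` for `n < r`.) -/
theorem statement_3 (lam : ℝ) (hlam : lam ≠ 0) (r : ℕ)
    (S : ℕ → ℕ → ℝ)
    (hS : ∀ (n : ℕ) (x : ℝ), dff lam (x + r) n = ∑ k ∈ Finset.range (n + 1), S n k * ff x k)
    (d : ℕ) (hd : r ≤ d) (a : ℕ → ℝ) (g : PowerSeries ℝ) :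
    ∑ m ∈ Finset.Icc r d, a m •
        ∑ k ∈ Finset.Icc r m,
          S (m - r) (k - r) • (PowerSeries.X ^ k * (derivativeFun (R := ℝ))^[k] g) =
      PowerSeries.mk fun n =>
        (PowerSeries.coeff (R := ℝ) n g) * (n.choose r) * (r.factorial) *
          ∑ m ∈ Finset.Icc r d, a m * dff lam (n : ℝ) (m - r) :=
  statement_3_general lam r S hS d a g
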